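/- Let u be a classical solution of the forward problem, and write ‖F‖² := ∫₀^T ∫₀^ℓ F(x,t)² dx dt. Then ∫₀^T ∫₀^ℓ (∂ₓₓu(x,t))² dx dt ≤ (ρ₀/r₀)(C_e² − 1) ‖F‖², where C_e² := exp(T/ρ₀). -/

import Mathlib

/-!
Energy method. Multiplying the equation by `2uₜ` gives the local balance
`∂ₜe + ∂ₓG = 2Fuₜ − 2μuₜ² − 2κuₓₓₜ²` for the energy density `e = ρ_A uₜ² + T_r uₓ² + r uₓₓ²`,
where the flux `G` vanishes at `x = 0, ℓ` by the simply supported boundary conditions.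
Integrating over `(0,ℓ) × (0,t)`, dropping the damping terms and using `2Fuₜ ≤ F² + ρ₀⁻¹ρ_A uₜ²`
yields `E(t) ≤ ‖F‖² + ρ₀⁻¹ ∫₀ᵗ E` for `E(t) = ∫₀^ℓ e`, so Grönwall gives `E(t) ≤ ‖F‖² exp(t/ρ₀)`.
Finally `r₀ ∫₀^ℓ uₓₓ² ≤ E(t)`, and integrating in `t` gives the bound.
-/

open Set

/-- A classical solution of the forward problem for the damped Euler–Bernoulli beam
equation `ρ_A(x) uₜₜ + μ(x) uₜ − (T_r(x) uₓ)ₓ + (r(x) uₓₓ + κ(x) uₓₓₜ)ₓₓ = F(x,t)` on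
`(0,ℓ) × (0,T)`, with homogeneous initial conditions and simply supported boundary
conditions.  The fields `ux, uxx, ut, utt, uxt, uxxt` are the partial derivatives of
`u`, `Ax` is the spatial derivative of `T_r(x) uₓ`, and `Bx, Bxx` are the first and
second spatial derivatives of the bending moment `B(x,t) = r(x) uₓₓ + κ(x) uₓₓₜ`. -/
structure ForwardSol (ℓ T : ℝ) (ρA μ Tr r κ : ℝ → ℝ) (F : ℝ → ℝ → ℝ) where
  u : ℝ → ℝ → ℝ
  ux : ℝ → ℝ → ℝ
  uxx : ℝ → ℝ → ℝ
  ut : ℝ → ℝ → ℝ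
  utt : ℝ → ℝ → ℝ
  uxt : ℝ → ℝ → ℝ
  uxxt : ℝ → ℝ → ℝ
  Ax : ℝ → ℝ → ℝ
  Bx : ℝ → ℝ → ℝ
  Bxx : ℝ → ℝ → ℝ
  smooth : ContDiffOn ℝ (⊤ : ℕ∞) (fun p : ℝ × ℝ => u p.1 p.2) (Icc 0 ℓ ×ˢ Icc 0 T)
  hux : ∀ x ∈ Icc (0:ℝ) ℓ, ∀ t ∈ Icc (0:ℝ) T, HasDerivAt (fun y => u y t) (ux x t) x
  huxx : ∀ x ∈ Icc (0:ℝ) ℓ, ∀ t ∈ Icc (0:ℝ) T, HasDerivAt (fun y => ux y t) (uxx x t) x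
  hut : ∀ x ∈ Icc (0:ℝ) ℓ, ∀ t ∈ Icc (0:ℝ) T, HasDerivAt (fun s => u x s) (ut x t) t
  hutt : ∀ x ∈ Icc (0:ℝ) ℓ, ∀ t ∈ Icc (0:ℝ) T, HasDerivAt (fun s => ut x s) (utt x t) t
  huxt : ∀ x ∈ Icc (0:ℝ) ℓ, ∀ t ∈ Icc (0:ℝ) T, HasDerivAt (fun s => ux x s) (uxt x t) t
  huxxt : ∀ x ∈ Icc (0:ℝ) ℓ, ∀ t ∈ Icc (0:ℝ) T, HasDerivAt (fun s => uxx x s) (uxxt x t) t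
  hAx : ∀ x ∈ Icc (0:ℝ) ℓ, ∀ t ∈ Icc (0:ℝ) T,
    HasDerivAt (fun y => Tr y * ux y t) (Ax x t) x
  hBx : ∀ x ∈ Icc (0:ℝ) ℓ, ∀ t ∈ Icc (0:ℝ) T,
    HasDerivAt (fun y => r y * uxx y t + κ y * uxxt y t) (Bx x t) x
  hBxx : ∀ x ∈ Icc (0:ℝ) ℓ, ∀ t ∈ Icc (0:ℝ) T, HasDerivAt (fun y => Bx y t) (Bxx x t) x
  cont_ux : ContinuousOn (fun p : ℝ × ℝ => ux p.1 p.2) (Icc 0 ℓ ×ˢ Icc 0 T)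
  cont_uxx : ContinuousOn (fun p : ℝ × ℝ => uxx p.1 p.2) (Icc 0 ℓ ×ˢ Icc 0 T)
  cont_ut : ContinuousOn (fun p : ℝ × ℝ => ut p.1 p.2) (Icc 0 ℓ ×ˢ Icc 0 T)
  cont_utt : ContinuousOn (fun p : ℝ × ℝ => utt p.1 p.2) (Icc 0 ℓ ×ˢ Icc 0 T)
  cont_uxt : ContinuousOn (fun p : ℝ × ℝ => uxt p.1 p.2) (Icc 0 ℓ ×ˢ Icc 0 T)
  cont_uxxt : ContinuousOn (fun p : ℝ × ℝ => uxxt p.1 p.2) (Icc 0 ℓ ×ˢ Icc 0 T)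
  cont_Ax : ContinuousOn (fun p : ℝ × ℝ => Ax p.1 p.2) (Icc 0 ℓ ×ˢ Icc 0 T)
  cont_Bx : ContinuousOn (fun p : ℝ × ℝ => Bx p.1 p.2) (Icc 0 ℓ ×ˢ Icc 0 T)
  cont_Bxx : ContinuousOn (fun p : ℝ × ℝ => Bxx p.1 p.2) (Icc 0 ℓ ×ˢ Icc 0 T)
  pde : ∀ x ∈ Ioo (0:ℝ) ℓ, ∀ t ∈ Ioo (0:ℝ) T,
    ρA x * utt x t + μ x * ut x t - Ax x t + Bxx x t = F x t
  init_u : ∀ x ∈ Ioo (0:ℝ) ℓ, u x 0 = 0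
  init_ut : ∀ x ∈ Ioo (0:ℝ) ℓ, ut x 0 = 0
  bc_u0 : ∀ t ∈ Icc (0:ℝ) T, u 0 t = 0
  bc_ul : ∀ t ∈ Icc (0:ℝ) T, u ℓ t = 0
  bc_m0 : ∀ t ∈ Icc (0:ℝ) T, r 0 * uxx 0 t + κ 0 * uxxt 0 t = 0
  bc_ml : ∀ t ∈ Icc (0:ℝ) T, r ℓ * uxx ℓ t + κ ℓ * uxxt ℓ t = 0

open Function Filter Topology MeasureTheory Real

theorem mul_gronwallBound_zero (K ε x : ℝ) :
    K * gronwallBound 0 K ε x = ε * (exp (K * x) - 1) := by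
  rcases eq_or_ne K 0 with rfl | hK
  · simp
  · rw [gronwallBound_of_K_ne_0 hK]
    field_simp
    ring

theorem le_mul_exp_of_le_add_mul_integral {E : ℝ → ℝ} {a b C K : ℝ} (hK : 0 ≤ K)
    (hE : ContinuousOn E (Icc a b))
    (h : ∀ t ∈ Icc a b, E t ≤ C + K * ∫ s in a..t, E s) :
    ∀ t ∈ Icc a b, E t ≤ C * exp (K * (t - a)) := by
  intro t ht
  have hab : a ≤ b := ht.1.trans ht.2
  -- extending `E` continuously off `[a, b]` makes its primitive differentiable everywhere
  set Ē := IccExtend hab ((Icc a b).domRestrict E)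
  have hĒ : Continuous Ē :=
    continuous_IccExtend_iff.2 (continuousOn_iff_continuous_domRestrict.1 hE)
  have hĒE : EqOn Ē E (Icc a b) := fun s hs => by simp [Ē, IccExtend_of_mem hab _ hs]
  set Φ := fun u => ∫ s in a..u, Ē s
  have hΦ : ∀ u, HasDerivAt Φ (Ē u) u := fun u => (hĒ.integral_hasStrictDerivAt a u).hasDerivAt
  have hΦE : ∀ u ∈ Icc a b, Φ u = ∫ s in a..u, E s := fun u hu =>
    intervalIntegral.integral_congr fun s hs => hĒE (uIcc_subset_Icc (left_mem_Icc.2 hab) hu hs)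
  have hgron : Φ t ≤ gronwallBound 0 K C (t - a) :=
    le_gronwallBound_of_liminf_deriv_right_le (f' := Ē) (b := b)
      (fun u _ => (hΦ u).continuousAt.continuousWithinAt)
      (fun u _ _ hr => (hΦ u).hasDerivWithinAt.liminf_right_slope_le hr)
      (by simp [Φ])
      (fun u hu => by
        rw [hĒE (Ico_subset_Icc_self hu), hΦE u (Ico_subset_Icc_self hu)]
        linarith [h u (Ico_subset_Icc_self hu)])
      t ht
  calc E t ≤ C + K * Φ t := by rw [hΦE t ht]; exact h t ht
    _ ≤ C + K * gronwallBound 0 K C (t - a) := by gcongr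
    _ = C * exp (K * (t - a)) := by rw [mul_gronwallBound_zero]; ring

theorem integral_exp_mul_of_ne_zero {c : ℝ} (hc : c ≠ 0) (a b : ℝ) :
    ∫ t in a..b, exp (c * t) = c⁻¹ * (exp (c * b) - exp (c * a)) := by
  rw [intervalIntegral.integral_comp_mul_left exp hc, integral_exp, smul_eq_mul]

theorem ContinuousOn.parametric_intervalIntegral {E : Type*} [NormedAddCommGroup E]
    [NormedSpace ℝ E] {f : ℝ → ℝ → E} {a b c d : ℝ} (hab : a ≤ b)
    (hf : ContinuousOn (uncurry f) (Icc a b ×ˢ Icc c d)) :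
    ContinuousOn (fun t => ∫ x in a..b, f x t) (Icc c d) := by
  intro t ht
  have hcd : c ≤ d := ht.1.trans ht.2
  -- clamping both variables into the rectangle extends `f` continuously to the whole plane
  set g : ℝ → ℝ → E := fun t x => f (projIcc a b hab x) (projIcc c d hcd t)
  have hg : Continuous (uncurry g) :=
    hf.comp_continuous
      (f := fun p : ℝ × ℝ => ((projIcc a b hab p.2 : ℝ), (projIcc c d hcd p.1 : ℝ))) (by fun_prop) fun p => ⟨(projIcc a b hab p.2).2, (projIcc c d hcd p.1).2⟩
  have hfg : EqOn (fun t => ∫ x in a..b, f x t) (fun t => ∫ x in a..b, g t x) (Icc c d) :=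
    fun s hs => intervalIntegral.integral_congr fun x hx => by
      simp [g, projIcc_of_mem hab (uIcc_of_le hab ▸ hx), projIcc_of_mem hcd hs]
  exact (intervalIntegral.continuous_parametric_intervalIntegral_of_continuous' (μ := volume)
    hg a b).continuousWithinAt.congr hfg (hfg ht)

section
variable {F : Type*} [NormedAddCommGroup F] [NormedSpace ℝ F] {V : ℝ × ℝ → F}
  {V' : ℝ × ℝ →L[ℝ] F} {x s : ℝ}

theorem HasFDerivAt.hasDerivAt_fst (h : HasFDerivAt V V' (x, s)) :
    HasDerivAt (fun y => V (y, s)) (V' (1, 0)) x :=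
  h.comp_hasDerivAt x ((hasDerivAt_id x).prodMk (hasDerivAt_const x s))

theorem HasFDerivAt.hasDerivAt_snd (h : HasFDerivAt V V' (x, s)) :
    HasDerivAt (fun τ => V (x, τ)) (V' (0, 1)) s :=
  h.comp_hasDerivAt s ((hasDerivAt_const s x).prodMk (hasDerivAt_id s))

end

theorem hasDerivAt_partial_comm {v vx vt : ℝ → ℝ → ℝ} {x s vxt : ℝ}
    (hv : ContDiffAt ℝ 2 (uncurry v) (x, s))
    (hvx : ∀ᶠ p in 𝓝 (x, s), HasDerivAt (v · p.2) (vx p.1 p.2) p.1)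
    (hvt : ∀ᶠ p in 𝓝 (x, s), HasDerivAt (v p.1 ·) (vt p.1 p.2) p.2)
    (hvxt : HasDerivAt (vx x ·) vxt s) :
    HasDerivAt (vt · s) vxt x := by
  set D := fderiv ℝ (uncurry v)
  have hD : ∀ᶠ p in 𝓝 (x, s), HasFDerivAt (uncurry v) (D p) p := by
    filter_upwards [hv.eventually (by simp)] with p hp
    exact (hp.differentiableAt (by simp)).hasFDerivAt
  have hD2 : HasFDerivAt D (fderiv ℝ D (x, s)) (x, s) :=
    ((hv.fderiv_right (m := 1) le_rfl).differentiableAt one_ne_zero).hasFDerivAt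
  have hvx_eq : ∀ᶠ τ in 𝓝 s, vx x τ = D (x, τ) (1, 0) := by
    have := (continuous_const.prodMk continuous_id).tendsto s |>.eventually (hD.and hvx)
    filter_upwards [this] with τ ⟨h1, h2⟩
    exact h2.unique h1.hasDerivAt_fst
  have hvt_eq : ∀ᶠ y in 𝓝 x, vt y s = D (y, s) (0, 1) := by
    have := (continuous_id.prodMk continuous_const).tendsto x |>.eventually (hD.and hvt)
    filter_upwards [this] with y ⟨h1, h2⟩
    exact h2.unique h1.hasDerivAt_snd
  have hxt : HasDerivAt (vx x ·) (fderiv ℝ D (x, s) (0, 1) (1, 0)) s :=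
    ((ContinuousLinearMap.apply ℝ ℝ ((1 : ℝ), (0 : ℝ))).hasFDerivAt.comp_hasDerivAt
      s hD2.hasDerivAt_snd).congr_of_eventuallyEq hvx_eq
  have htx : HasDerivAt (vt · s) (fderiv ℝ D (x, s) (1, 0) (0, 1)) x :=
    ((ContinuousLinearMap.apply ℝ ℝ ((0 : ℝ), (1 : ℝ))).hasFDerivAt.comp_hasDerivAt
      x hD2.hasDerivAt_fst).congr_of_eventuallyEq hvt_eq
  rwa [hvxt.unique hxt, second_derivative_symmetric_of_eventually hD hD2]

theorem contDiffAt_uncurry_partial_fst {v vx : ℝ → ℝ → ℝ} {p : ℝ × ℝ} {n : ℕ}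
    (hv : ContDiffAt ℝ (n + 1) (uncurry v) p)
    (hvx : ∀ᶠ q in 𝓝 p, HasDerivAt (v · q.2) (vx q.1 q.2) q.1) :
    ContDiffAt ℝ n (uncurry vx) p := by
  refine ((hv.fderiv_right le_rfl).clm_apply
    (contDiffAt_const (c := ((1 : ℝ), (0 : ℝ))))).congr_of_eventuallyEq ?_
  filter_upwards [hv.eventually (by simp), hvx] with q hq hvxq
  exact hvxq.unique (hq.differentiableAt (by simp)).hasFDerivAt.hasDerivAt_fst

theorem HasDerivAt.eq_zero_of_eventuallyEq_zero {f : ℝ → ℝ} {f' x : ℝ} (hf : HasDerivAt f f' x)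
    (h : f =ᶠ[𝓝 x] fun _ => 0) : f' = 0 :=
  hf.unique ((hasDerivAt_const x 0).congr_of_eventuallyEq h)

theorem eventually_mem_Icc_prod_Icc {ℓ T x t : ℝ} (hx : x ∈ Ioo 0 ℓ) (ht : t ∈ Ioo 0 T) :
    ∀ᶠ p : ℝ × ℝ in 𝓝 (x, t), p.1 ∈ Icc 0 ℓ ∧ p.2 ∈ Icc 0 T :=
  prod_mem_nhds (Icc_mem_nhds hx.1 hx.2) (Icc_mem_nhds ht.1 ht.2)

namespace ForwardSol

variable {ℓ T : ℝ} {ρA μ Tr r κ : ℝ → ℝ} {F : ℝ → ℝ → ℝ} (sol : ForwardSol ℓ T ρA μ Tr r κ F)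

theorem init_ux (hT : 0 ≤ T) {x : ℝ} (hx : x ∈ Ioo 0 ℓ) : sol.ux x 0 = 0 :=
  (sol.hux x (Ioo_subset_Icc_self hx) 0 (left_mem_Icc.2 hT)).eq_zero_of_eventuallyEq_zero <|
    eventually_of_mem (Ioo_mem_nhds hx.1 hx.2) sol.init_u

theorem init_uxx (hT : 0 ≤ T) {x : ℝ} (hx : x ∈ Ioo 0 ℓ) : sol.uxx x 0 = 0 :=
  (sol.huxx x (Ioo_subset_Icc_self hx) 0 (left_mem_Icc.2 hT)).eq_zero_of_eventuallyEq_zero <|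
    eventually_of_mem (Ioo_mem_nhds hx.1 hx.2) fun _ hy => sol.init_ux hT hy

theorem bc_ut0 (hℓ : 0 ≤ ℓ) {t : ℝ} (ht : t ∈ Ioo 0 T) : sol.ut 0 t = 0 :=
  (sol.hut 0 (left_mem_Icc.2 hℓ) t (Ioo_subset_Icc_self ht)).eq_zero_of_eventuallyEq_zero <|
    eventually_of_mem (Ioo_mem_nhds ht.1 ht.2) fun _ hs => sol.bc_u0 _ (Ioo_subset_Icc_self hs)

theorem bc_utl (hℓ : 0 ≤ ℓ) {t : ℝ} (ht : t ∈ Ioo 0 T) : sol.ut ℓ t = 0 :=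
  (sol.hut ℓ (right_mem_Icc.2 hℓ) t (Ioo_subset_Icc_self ht)).eq_zero_of_eventuallyEq_zero <|
    eventually_of_mem (Ioo_mem_nhds ht.1 ht.2) fun _ hs => sol.bc_ul _ (Ioo_subset_Icc_self hs)

theorem contDiffAt_u (n : ℕ) {x t : ℝ} (hx : x ∈ Ioo 0 ℓ) (ht : t ∈ Ioo 0 T) :
    ContDiffAt ℝ n (uncurry sol.u) (x, t) :=
  (sol.smooth.contDiffAt (eventually_mem_Icc_prod_Icc hx ht)).of_le (by exact_mod_cast le_top)

theorem hasDerivAt_ut_x {x t : ℝ} (hx : x ∈ Ioo 0 ℓ) (ht : t ∈ Ioo 0 T) :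
    HasDerivAt (sol.ut · t) (sol.uxt x t) x :=
  hasDerivAt_partial_comm (sol.contDiffAt_u 2 hx ht)
    ((eventually_mem_Icc_prod_Icc hx ht).mono fun p hp => sol.hux p.1 hp.1 p.2 hp.2)
    ((eventually_mem_Icc_prod_Icc hx ht).mono fun p hp => sol.hut p.1 hp.1 p.2 hp.2)
    (sol.huxt x (Ioo_subset_Icc_self hx) t (Ioo_subset_Icc_self ht))

theorem hasDerivAt_uxt_x {x t : ℝ} (hx : x ∈ Ioo 0 ℓ) (ht : t ∈ Ioo 0 T) :
    HasDerivAt (sol.uxt · t) (sol.uxxt x t) x :=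
  hasDerivAt_partial_comm
    (contDiffAt_uncurry_partial_fst (sol.contDiffAt_u 3 hx ht)
      ((eventually_mem_Icc_prod_Icc hx ht).mono fun p hp => sol.hux p.1 hp.1 p.2 hp.2))
    ((eventually_mem_Icc_prod_Icc hx ht).mono fun p hp => sol.huxx p.1 hp.1 p.2 hp.2)
    ((eventually_mem_Icc_prod_Icc hx ht).mono fun p hp => sol.huxt p.1 hp.1 p.2 hp.2)
    (sol.huxxt x (Ioo_subset_Icc_self hx) t (Ioo_subset_Icc_self ht))

def energyDensity (x t : ℝ) : ℝ :=
  ρA x * sol.ut x t ^ 2 + Tr x * sol.ux x t ^ 2 + r x * sol.uxx x t ^ 2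

def energyDensityRate (x t : ℝ) : ℝ :=
  2 * (ρA x * sol.utt x t * sol.ut x t + Tr x * sol.ux x t * sol.uxt x t +
    r x * sol.uxx x t * sol.uxxt x t)

/-- The boundary term left by integrating `2uₜ (Bₓₓ − (T_r uₓ)ₓ)` over `x` by parts, with
`B = r uₓₓ + κ uₓₓₜ` the bending moment. -/
def energyFlux (x t : ℝ) : ℝ :=
  2 * ((sol.Bx x t - Tr x * sol.ux x t) * sol.ut x t -
    (r x * sol.uxx x t + κ x * sol.uxxt x t) * sol.uxt x t)

def energyFluxDiv (x t : ℝ) : ℝ :=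
  2 * ((sol.Bxx x t - sol.Ax x t) * sol.ut x t - Tr x * sol.ux x t * sol.uxt x t -
    (r x * sol.uxx x t + κ x * sol.uxxt x t) * sol.uxxt x t)

noncomputable def energy (t : ℝ) : ℝ := ∫ x in 0..ℓ, sol.energyDensity x t

theorem init_energyDensity (hT : 0 ≤ T) {x : ℝ} (hx : x ∈ Ioo 0 ℓ) :
    sol.energyDensity x 0 = 0 := by
  simp [energyDensity, sol.init_ut x hx, sol.init_ux hT hx, sol.init_uxx hT hx]

theorem hasDerivAt_energyDensity {x t : ℝ} (hx : x ∈ Icc 0 ℓ) (ht : t ∈ Icc 0 T) :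
    HasDerivAt (sol.energyDensity x ·) (sol.energyDensityRate x t) t := by
  have := ((((sol.hutt x hx t ht).pow 2).const_mul (ρA x)).add
    (((sol.huxt x hx t ht).pow 2).const_mul (Tr x))).add
    (((sol.huxxt x hx t ht).pow 2).const_mul (r x))
  exact this.congr_deriv (by simp [energyDensityRate]; ring)

theorem hasDerivAt_energyFlux {x t : ℝ} (hx : x ∈ Ioo 0 ℓ) (ht : t ∈ Ioo 0 T) :
    HasDerivAt (sol.energyFlux · t) (sol.energyFluxDiv x t) x := by
  have hx' := Ioo_subset_Icc_self hx
  have ht' := Ioo_subset_Icc_self ht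
  have := ((((sol.hBxx x hx' t ht').sub (sol.hAx x hx' t ht')).mul (sol.hasDerivAt_ut_x hx ht)).sub
    ((sol.hBx x hx' t ht').mul (sol.hasDerivAt_uxt_x hx ht))).const_mul 2
  exact this.congr_deriv (by simp [energyFluxDiv]; ring)

theorem bc_energyFlux0 (hℓ : 0 ≤ ℓ) {t : ℝ} (ht : t ∈ Ioo 0 T) : sol.energyFlux 0 t = 0 := by
  simp [energyFlux, sol.bc_ut0 hℓ ht, sol.bc_m0 t (Ioo_subset_Icc_self ht)]

theorem bc_energyFluxl (hℓ : 0 ≤ ℓ) {t : ℝ} (ht : t ∈ Ioo 0 T) : sol.energyFlux ℓ t = 0 := by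
  simp [energyFlux, sol.bc_utl hℓ ht, sol.bc_ml t (Ioo_subset_Icc_self ht)]

theorem energyDensityRate_add_energyFluxDiv {x t : ℝ} (hx : x ∈ Ioo 0 ℓ) (ht : t ∈ Ioo 0 T) :
    sol.energyDensityRate x t + sol.energyFluxDiv x t =
      2 * (F x t * sol.ut x t - μ x * sol.ut x t ^ 2 - κ x * sol.uxxt x t ^ 2) := by
  unfold energyDensityRate energyFluxDiv
  linear_combination 2 * sol.ut x t * sol.pde x hx t ht

theorem continuousOn_energyDensity (hρA : ContinuousOn ρA (Icc 0 ℓ))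
    (hTr : ContinuousOn Tr (Icc 0 ℓ)) (hr : ContinuousOn r (Icc 0 ℓ)) :
    ContinuousOn (uncurry sol.energyDensity) (Icc 0 ℓ ×ˢ Icc 0 T) := by
  have := sol.cont_ut; have := sol.cont_ux; have := sol.cont_uxx
  unfold energyDensity uncurry; beta_reduce
  fun_prop (disch := exact mapsTo_fst_prod)

theorem continuousOn_energyDensityRate (hρA : ContinuousOn ρA (Icc 0 ℓ))
    (hTr : ContinuousOn Tr (Icc 0 ℓ)) (hr : ContinuousOn r (Icc 0 ℓ)) :
    ContinuousOn (uncurry sol.energyDensityRate) (Icc 0 ℓ ×ˢ Icc 0 T) := by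
  have := sol.cont_ut; have := sol.cont_ux; have := sol.cont_uxx
  have := sol.cont_utt; have := sol.cont_uxt; have := sol.cont_uxxt
  unfold energyDensityRate uncurry; beta_reduce
  fun_prop (disch := exact mapsTo_fst_prod)

theorem continuousOn_energyFlux (hTr : ContinuousOn Tr (Icc 0 ℓ))
    (hr : ContinuousOn r (Icc 0 ℓ)) (hκ : ContinuousOn κ (Icc 0 ℓ)) :
    ContinuousOn (uncurry sol.energyFlux) (Icc 0 ℓ ×ˢ Icc 0 T) := by
  have := sol.cont_ut; have := sol.cont_ux; have := sol.cont_uxx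
  have := sol.cont_Bx; have := sol.cont_uxt; have := sol.cont_uxxt
  unfold energyFlux uncurry; beta_reduce
  fun_prop (disch := exact mapsTo_fst_prod)

theorem continuousOn_energyFluxDiv (hTr : ContinuousOn Tr (Icc 0 ℓ))
    (hr : ContinuousOn r (Icc 0 ℓ)) (hκ : ContinuousOn κ (Icc 0 ℓ)) :
    ContinuousOn (uncurry sol.energyFluxDiv) (Icc 0 ℓ ×ˢ Icc 0 T) := by
  have := sol.cont_ut; have := sol.cont_ux; have := sol.cont_uxx; have := sol.cont_Ax
  have := sol.cont_Bxx; have := sol.cont_uxt; have := sol.cont_uxxt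
  unfold energyFluxDiv uncurry; beta_reduce
  fun_prop (disch := exact mapsTo_fst_prod)

theorem integral_energyFluxDiv (hℓ : 0 ≤ ℓ) (hTr : ContinuousOn Tr (Icc 0 ℓ))
    (hr : ContinuousOn r (Icc 0 ℓ)) (hκ : ContinuousOn κ (Icc 0 ℓ)) {t : ℝ} (ht : t ∈ Ioo 0 T) :
    ∫ x in 0..ℓ, sol.energyFluxDiv x t = 0 := by
  have ht' := Ioo_subset_Icc_self ht
  rw [intervalIntegral.integral_eq_sub_of_hasDeriv_right_of_le hℓ
    ((sol.continuousOn_energyFlux hTr hr hκ).uncurry_right t ht')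
    (fun x hx => (sol.hasDerivAt_energyFlux hx ht).hasDerivWithinAt)
    (((sol.continuousOn_energyFluxDiv hTr hr hκ).uncurry_right t ht').intervalIntegrable_of_Icc hℓ),
    sol.bc_energyFlux0 hℓ ht, sol.bc_energyFluxl hℓ ht, sub_zero]

theorem energy_eq_integral_energyDensityRate (hℓ : 0 ≤ ℓ) (hρA : ContinuousOn ρA (Icc 0 ℓ))
    (hTr : ContinuousOn Tr (Icc 0 ℓ)) (hr : ContinuousOn r (Icc 0 ℓ)) {t : ℝ} (ht : t ∈ Icc 0 T) :
    sol.energy t = ∫ s in 0..t, ∫ x in 0..ℓ, sol.energyDensityRate x s := by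
  have hrate := sol.continuousOn_energyDensityRate hρA hTr hr
  have hsub : Icc 0 t ⊆ Icc 0 T := Icc_subset_Icc_right ht.2
  calc sol.energy t = ∫ x in 0..ℓ, ∫ s in 0..t, sol.energyDensityRate x s := by
        refine intervalIntegral.integral_congr_Ioo_of_le hℓ fun x hx => ?_
        have hx' := Ioo_subset_Icc_self hx
        rw [intervalIntegral.integral_eq_sub_of_hasDerivAt
          (fun s hs => sol.hasDerivAt_energyDensity hx' (hsub (uIcc_of_le ht.1 ▸ hs)))
          (((hrate.uncurry_left x hx').mono hsub).intervalIntegrable_of_Icc ht.1),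
          sol.init_energyDensity (ht.1.trans ht.2) hx, sub_zero]
    _ = ∫ s in 0..t, ∫ x in 0..ℓ, sol.energyDensityRate x s := by
        refine intervalIntegral_intervalIntegral_swap ((hrate.integrableOn_compact
          (isCompact_Icc.prod isCompact_Icc)).mono_set ?_)
        rw [uIoc_of_le hℓ, uIoc_of_le ht.1]
        exact prod_mono Ioc_subset_Icc_self (Ioc_subset_Icc_self.trans hsub)

theorem continuousOn_energy (hℓ : 0 ≤ ℓ) (hρA : ContinuousOn ρA (Icc 0 ℓ))
    (hTr : ContinuousOn Tr (Icc 0 ℓ)) (hr : ContinuousOn r (Icc 0 ℓ)) :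
    ContinuousOn sol.energy (Icc 0 T) :=
  (sol.continuousOn_energyDensity hρA hTr hr).parametric_intervalIntegral hℓ

theorem energySource_le {ρ₀ x t : ℝ} (hρ₀ : 0 < ρ₀) (hρA : ρ₀ ≤ ρA x) (hμ : 0 ≤ μ x)
    (hTr : 0 ≤ Tr x) (hr : 0 ≤ r x) (hκ : 0 ≤ κ x) :
    2 * (F x t * sol.ut x t - μ x * sol.ut x t ^ 2 - κ x * sol.uxxt x t ^ 2) ≤
      F x t ^ 2 + ρ₀⁻¹ * sol.energyDensity x t := by
  have hut : sol.ut x t ^ 2 ≤ ρ₀⁻¹ * (ρA x * sol.ut x t ^ 2) := by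
    rw [inv_mul_eq_div, le_div_iff₀ hρ₀, mul_comm]
    exact mul_le_mul_of_nonneg_right hρA (sq_nonneg _)
  have hrest : 0 ≤ ρ₀⁻¹ * (Tr x * sol.ux x t ^ 2 + r x * sol.uxx x t ^ 2) := by positivity
  have hdiss : 0 ≤ μ x * sol.ut x t ^ 2 + κ x * sol.uxxt x t ^ 2 := by positivity
  unfold energyDensity
  nlinarith [sq_nonneg (F x t - sol.ut x t)]

theorem integral_energyDensityRate_le (hℓ : 0 ≤ ℓ) {ρ₀ : ℝ} (hρ₀ : 0 < ρ₀)
    (hρA : ContinuousOn ρA (Icc 0 ℓ)) (hTr : ContinuousOn Tr (Icc 0 ℓ))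
    (hr : ContinuousOn r (Icc 0 ℓ)) (hκ : ContinuousOn κ (Icc 0 ℓ))
    (hF : ContinuousOn (uncurry F) (Icc 0 ℓ ×ˢ Icc 0 T))
    (hρAb : ∀ x ∈ Icc 0 ℓ, ρ₀ ≤ ρA x) (hμb : ∀ x ∈ Icc 0 ℓ, 0 ≤ μ x)
    (hTrb : ∀ x ∈ Icc 0 ℓ, 0 ≤ Tr x) (hrb : ∀ x ∈ Icc 0 ℓ, 0 ≤ r x)
    (hκb : ∀ x ∈ Icc 0 ℓ, 0 ≤ κ x) {t : ℝ} (ht : t ∈ Ioo 0 T) :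
    ∫ x in 0..ℓ, sol.energyDensityRate x t ≤
      (∫ x in 0..ℓ, F x t ^ 2) + ρ₀⁻¹ * sol.energy t := by
  have ht' := Ioo_subset_Icc_self ht
  have hslice : ∀ {f : ℝ → ℝ → ℝ}, ContinuousOn (uncurry f) (Icc 0 ℓ ×ˢ Icc 0 T) →
      IntervalIntegrable (f · t) volume 0 ℓ :=
    fun hf => (hf.uncurry_right t ht').intervalIntegrable_of_Icc hℓ
  have hrate := hslice (sol.continuousOn_energyDensityRate hρA hTr hr)
  have hflux := hslice (sol.continuousOn_energyFluxDiv hTr hr hκ)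
  have hF2 := hslice (f := fun x t => F x t ^ 2) (by exact hF.pow 2)
  have he := hslice (sol.continuousOn_energyDensity hρA hTr hr)
  calc ∫ x in 0..ℓ, sol.energyDensityRate x t
      = ∫ x in 0..ℓ, sol.energyDensityRate x t + sol.energyFluxDiv x t := by
        rw [intervalIntegral.integral_add hrate hflux,
          sol.integral_energyFluxDiv hℓ hTr hr hκ ht, add_zero]
    _ ≤ ∫ x in 0..ℓ, F x t ^ 2 + ρ₀⁻¹ * sol.energyDensity x t := by
        refine intervalIntegral.integral_mono_on_of_le_Ioo hℓ (hrate.add hflux)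
          (hF2.add (he.const_mul _)) fun x hx => ?_
        have hx' := Ioo_subset_Icc_self hx
        rw [sol.energyDensityRate_add_energyFluxDiv hx ht]
        exact sol.energySource_le hρ₀ (hρAb x hx') (hμb x hx') (hTrb x hx') (hrb x hx') (hκb x hx')
    _ = (∫ x in 0..ℓ, F x t ^ 2) + ρ₀⁻¹ * sol.energy t := by
        rw [intervalIntegral.integral_add hF2 (he.const_mul _),
          intervalIntegral.integral_const_mul, energy]

theorem energy_le_add_mul_integral_energy (hℓ : 0 ≤ ℓ) {ρ₀ : ℝ} (hρ₀ : 0 < ρ₀)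
    (hρA : ContinuousOn ρA (Icc 0 ℓ)) (hTr : ContinuousOn Tr (Icc 0 ℓ))
    (hr : ContinuousOn r (Icc 0 ℓ)) (hκ : ContinuousOn κ (Icc 0 ℓ))
    (hF : ContinuousOn (uncurry F) (Icc 0 ℓ ×ˢ Icc 0 T))
    (hρAb : ∀ x ∈ Icc 0 ℓ, ρ₀ ≤ ρA x) (hμb : ∀ x ∈ Icc 0 ℓ, 0 ≤ μ x)
    (hTrb : ∀ x ∈ Icc 0 ℓ, 0 ≤ Tr x) (hrb : ∀ x ∈ Icc 0 ℓ, 0 ≤ r x)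
    (hκb : ∀ x ∈ Icc 0 ℓ, 0 ≤ κ x) {t : ℝ} (ht : t ∈ Icc 0 T) :
    sol.energy t ≤ (∫ s in 0..T, ∫ x in 0..ℓ, F x s ^ 2) + ρ₀⁻¹ * ∫ s in 0..t, sol.energy s := by
  have hsub : Icc 0 t ⊆ Icc 0 T := Icc_subset_Icc_right ht.2
  have hsource : ContinuousOn (fun s => ∫ x in 0..ℓ, F x s ^ 2) (Icc 0 T) :=
    ContinuousOn.parametric_intervalIntegral (f := fun x s => F x s ^ 2) hℓ (by exact hF.pow 2)
  have hrate := (sol.continuousOn_energyDensityRate hρA hTr hr).parametric_intervalIntegral hℓ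
  have hE := sol.continuousOn_energy hℓ hρA hTr hr
  have hsource_t := (hsource.mono hsub).intervalIntegrable_of_Icc (μ := volume) ht.1
  have hE_t := (hE.mono hsub).intervalIntegrable_of_Icc (μ := volume) ht.1
  calc sol.energy t = ∫ s in 0..t, ∫ x in 0..ℓ, sol.energyDensityRate x s :=
        sol.energy_eq_integral_energyDensityRate hℓ hρA hTr hr ht
    _ ≤ ∫ s in 0..t, (∫ x in 0..ℓ, F x s ^ 2) + ρ₀⁻¹ * sol.energy s :=
        intervalIntegral.integral_mono_on_of_le_Ioo ht.1
          ((hrate.mono hsub).intervalIntegrable_of_Icc ht.1) (hsource_t.add (hE_t.const_mul _))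
          fun s hs => sol.integral_energyDensityRate_le hℓ hρ₀ hρA hTr hr hκ hF hρAb hμb hTrb hrb
            hκb ⟨hs.1, hs.2.trans_le ht.2⟩
    _ = (∫ s in 0..t, ∫ x in 0..ℓ, F x s ^ 2) + ρ₀⁻¹ * ∫ s in 0..t, sol.energy s := by
        rw [intervalIntegral.integral_add hsource_t (hE_t.const_mul _),
          intervalIntegral.integral_const_mul]
    _ ≤ (∫ s in 0..T, ∫ x in 0..ℓ, F x s ^ 2) + ρ₀⁻¹ * ∫ s in 0..t, sol.energy s := by
        gcongr
        refine intervalIntegral.integral_mono_interval le_rfl ht.1 ht.2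
          (ae_of_all _ fun s => intervalIntegral.integral_nonneg hℓ fun x _ => sq_nonneg _)
          (hsource.intervalIntegrable_of_Icc (ht.1.trans ht.2))

theorem mul_integral_uxx_sq_le_energy (hℓ : 0 ≤ ℓ) {r₀ : ℝ}
    (hρA : ContinuousOn ρA (Icc 0 ℓ)) (hTr : ContinuousOn Tr (Icc 0 ℓ))
    (hr : ContinuousOn r (Icc 0 ℓ)) (hρAb : ∀ x ∈ Icc 0 ℓ, 0 ≤ ρA x)
    (hTrb : ∀ x ∈ Icc 0 ℓ, 0 ≤ Tr x) (hrb : ∀ x ∈ Icc 0 ℓ, r₀ ≤ r x) {t : ℝ} (ht : t ∈ Icc 0 T) :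
    r₀ * ∫ x in 0..ℓ, sol.uxx x t ^ 2 ≤ sol.energy t := by
  rw [← intervalIntegral.integral_const_mul]
  refine intervalIntegral.integral_mono_on hℓ
    ((ContinuousOn.uncurry_right (f := fun x t => sol.uxx x t ^ 2) t ht
      (by exact sol.cont_uxx.pow 2)).intervalIntegrable_of_Icc hℓ |>.const_mul _)
    (((sol.continuousOn_energyDensity hρA hTr hr).uncurry_right t ht).intervalIntegrable_of_Icc hℓ)
    fun x hx => ?_
  have := mul_le_mul_of_nonneg_right (hrb x hx) (sq_nonneg (sol.uxx x t))
  unfold energyDensity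
  nlinarith [mul_nonneg (hρAb x hx) (sq_nonneg (sol.ut x t)),
    mul_nonneg (hTrb x hx) (sq_nonneg (sol.ux x t))]

end ForwardSol

theorem curvature_L2_estimate_general
    (ℓ T ρ₀ r₀ κ₀ : ℝ) (hℓ : 0 < ℓ) (hT : 0 < T)
    (hρ₀ : 0 < ρ₀) (hr₀ : 0 < r₀) (hκ₀ : 0 < κ₀)
    (ρA μ Tr r κ : ℝ → ℝ) (F : ℝ → ℝ → ℝ)
    (hρA : ContDiffOn ℝ (⊤ : ℕ∞) ρA (Icc 0 ℓ))
    (hTr : ContDiffOn ℝ (⊤ : ℕ∞) Tr (Icc 0 ℓ))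
    (hr : ContDiffOn ℝ (⊤ : ℕ∞) r (Icc 0 ℓ))
    (hκ : ContDiffOn ℝ (⊤ : ℕ∞) κ (Icc 0 ℓ))
    (hρAb : ∀ x ∈ Icc (0:ℝ) ℓ, ρ₀ ≤ ρA x)
    (hμb : ∀ x ∈ Icc (0:ℝ) ℓ, 0 ≤ μ x)
    (hTrb : ∀ x ∈ Icc (0:ℝ) ℓ, 0 ≤ Tr x)
    (hrb : ∀ x ∈ Icc (0:ℝ) ℓ, r₀ ≤ r x)
    (hκb : ∀ x ∈ Icc (0:ℝ) ℓ, κ₀ ≤ κ x)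
    (hF : ContinuousOn (fun p : ℝ × ℝ => F p.1 p.2) (Icc 0 ℓ ×ˢ Icc 0 T))
    (sol : ForwardSol ℓ T ρA μ Tr r κ F) :
    (∫ t in (0:ℝ)..T, ∫ x in (0:ℝ)..ℓ, (sol.uxx x t) ^ 2)
      ≤ (ρ₀ / r₀) * (Real.exp (T / ρ₀) - 1) * (∫ t in (0:ℝ)..T, ∫ x in (0:ℝ)..ℓ, (F x t) ^ 2) := by
  set C := ∫ t in (0:ℝ)..T, ∫ x in (0:ℝ)..ℓ, F x t ^ 2
  have hρA_nonneg : ∀ x ∈ Icc 0 ℓ, 0 ≤ ρA x := fun x hx => hρ₀.le.trans (hρAb x hx)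
  have hr_nonneg : ∀ x ∈ Icc 0 ℓ, 0 ≤ r x := fun x hx => hr₀.le.trans (hrb x hx)
  have hκ_nonneg : ∀ x ∈ Icc 0 ℓ, 0 ≤ κ x := fun x hx => hκ₀.le.trans (hκb x hx)
  have henergy : ∀ t ∈ Icc 0 T, sol.energy t ≤ C * exp (ρ₀⁻¹ * t) := by
    simpa using le_mul_exp_of_le_add_mul_integral (inv_nonneg.2 hρ₀.le)
      (sol.continuousOn_energy hℓ.le hρA.continuousOn hTr.continuousOn hr.continuousOn)
      fun t ht => sol.energy_le_add_mul_integral_energy hℓ.le hρ₀ hρA.continuousOn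
        hTr.continuousOn hr.continuousOn hκ.continuousOn hF hρAb hμb hTrb hr_nonneg hκ_nonneg ht
  have hcurv : ∀ t ∈ Icc 0 T, ∫ x in 0..ℓ, sol.uxx x t ^ 2 ≤ C / r₀ * exp (ρ₀⁻¹ * t) := by
    intro t ht
    rw [div_mul_eq_mul_div, le_div_iff₀ hr₀, mul_comm]
    exact (sol.mul_integral_uxx_sq_le_energy hℓ.le hρA.continuousOn hTr.continuousOn
      hr.continuousOn hρA_nonneg hTrb hrb ht).trans (henergy t ht)
  calc (∫ t in (0:ℝ)..T, ∫ x in (0:ℝ)..ℓ, sol.uxx x t ^ 2)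
      ≤ ∫ t in (0:ℝ)..T, C / r₀ * exp (ρ₀⁻¹ * t) :=
        intervalIntegral.integral_mono_on hT.le
          (ContinuousOn.parametric_intervalIntegral (f := fun x t => sol.uxx x t ^ 2) hℓ.le
            (by exact sol.cont_uxx.pow 2) |>.intervalIntegrable_of_Icc hT.le)
          ((by fun_prop : Continuous _).intervalIntegrable _ _) hcurv
    _ = (ρ₀ / r₀) * (Real.exp (T / ρ₀) - 1) * C := by
        rw [intervalIntegral.integral_const_mul, integral_exp_mul_of_ne_zero (by positivity)]
        simp only [mul_zero, exp_zero, inv_inv, inv_mul_eq_div]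
        ring

/-- **The fourth estimate of Theorem 1.** -/
theorem curvature_L2_estimate
    (ℓ T ρ₀ r₀ κ₀ : ℝ) (hℓ : 0 < ℓ) (hT : 0 < T)
    (hρ₀ : 0 < ρ₀) (hr₀ : 0 < r₀) (hκ₀ : 0 < κ₀)
    (ρA μ Tr r κ : ℝ → ℝ) (F : ℝ → ℝ → ℝ)
    (hρA : ContDiffOn ℝ (⊤ : ℕ∞) ρA (Icc 0 ℓ))
    (hμ : ContDiffOn ℝ (⊤ : ℕ∞) μ (Icc 0 ℓ))
    (hTr : ContDiffOn ℝ (⊤ : ℕ∞) Tr (Icc 0 ℓ))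
    (hr : ContDiffOn ℝ (⊤ : ℕ∞) r (Icc 0 ℓ))
    (hκ : ContDiffOn ℝ (⊤ : ℕ∞) κ (Icc 0 ℓ))
    (hρAb : ∀ x ∈ Icc (0:ℝ) ℓ, ρ₀ ≤ ρA x)
    (hμb : ∀ x ∈ Icc (0:ℝ) ℓ, 0 ≤ μ x)
    (hTrb : ∀ x ∈ Icc (0:ℝ) ℓ, 0 ≤ Tr x)
    (hrb : ∀ x ∈ Icc (0:ℝ) ℓ, r₀ ≤ r x)
    (hκb : ∀ x ∈ Icc (0:ℝ) ℓ, κ₀ ≤ κ x)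
    (hF : ContinuousOn (fun p : ℝ × ℝ => F p.1 p.2) (Icc 0 ℓ ×ˢ Icc 0 T))
    (sol : ForwardSol ℓ T ρA μ Tr r κ F) :
    (∫ t in (0:ℝ)..T, ∫ x in (0:ℝ)..ℓ, (sol.uxx x t) ^ 2)
      ≤ (ρ₀ / r₀) * (Real.exp (T / ρ₀) - 1) * (∫ t in (0:ℝ)..T, ∫ x in (0:ℝ)..ℓ, (F x t) ^ 2) :=
  curvature_L2_estimate_general ℓ T ρ₀ r₀ κ₀ hℓ hT hρ₀ hr₀ hκ₀ ρA μ Tr r κ F hρA hTr hr hκ hρAb hμb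
    hTrb hrb hκb hF sol
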